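/- Every graph G on 4 vertices that contains a spanning subgraph G' with e(G') ≥ 12, minimum degree δ(G') ≥ 4, and maximum edge multiplicity μ(G') ≤ 4 satisfies: every partition 𝒫 of V(G') has w_{G'}(𝒫) ≥ 0. -/

import Mathlib

open Finset

/-- A loopless multigraph on vertex type `V`, given by a symmetric multiplicity function. -/
structure Multigraph (V : Type*) where
  mult : V → V → ℕ
  symm : ∀ u v, mult u v = mult v u
  loopless : ∀ v, mult v v = 0

namespace Multigraph

variable {V W : Type*}

/-- The underlying simple graph (adjacency = positive multiplicity). -/
def toSimpleGraph (G : Multigraph V) : SimpleGraph V where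
  Adj u v := 0 < G.mult u v
  symm := by
    constructor
    intro u v h
    rwa [G.symm v u]
  loopless := by
    constructor
    intro v h
    simp [G.loopless v] at h

/-- Connectivity of a multigraph. -/
def Connected (G : Multigraph V) : Prop := G.toSimpleGraph.Connected

/-- Number of edges `e(G)`. -/
def edgeCount (G : Multigraph V) [Fintype V] : ℕ := (∑ u, ∑ v, G.mult u v) / 2

/-- `d(X)`: the number of edges with exactly one endpoint in `X`. -/
def cut (G : Multigraph V) [Fintype V] [DecidableEq V] (X : Finset V) : ℕ :=
  ∑ u ∈ X, ∑ v ∈ Xᶜ, G.mult u v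

/-- Degree of a vertex (with multiplicity). -/
def degree (G : Multigraph V) [Fintype V] (v : V) : ℕ := ∑ u, G.mult v u

/-- Number of edges of `G` with both endpoints in `A` (edges of the induced subgraph `G[A]`). -/
def edgesWithin (G : Multigraph V) (A : Finset V) : ℕ :=
  (∑ u ∈ A, ∑ v ∈ A, G.mult u v) / 2

/-- Weight of a family of parts: `Σ d(A) − 10·t + 16`. -/
def partsWeight (G : Multigraph V) [Fintype V] [DecidableEq V]
    (Ps : Finset (Finset V)) : ℤ :=
  (∑ A ∈ Ps, (G.cut A : ℤ)) - 10 * Ps.card + 16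

/-- Weight `w_G(𝒫)` of a vertex partition `𝒫`. -/
def pweight (G : Multigraph V) [Fintype V] [DecidableEq V]
    (P : Finpartition (univ : Finset V)) : ℤ :=
  G.partsWeight P.parts

/-- Weight `w_{G[A]}(Q)` of a partition `Q` of `A` in the induced subgraph `G[A]`. -/
def inducedWeight (G : Multigraph V) [DecidableEq V] (A : Finset V)
    (Q : Finpartition A) : ℤ :=
  (∑ B ∈ Q.parts, ((∑ u ∈ B, ∑ v ∈ A \ B, G.mult u v : ℕ) : ℤ))
    - 10 * Q.parts.card + 16

/-- Isomorphism of multigraphs. -/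
def Iso (G : Multigraph V) (H : Multigraph W) : Prop :=
  ∃ e : V ≃ W, ∀ u v, H.mult (e u) (e v) = G.mult u v

/-- Contraction `G/𝒫`: identify each part to a single vertex and delete loops. -/
def contract (G : Multigraph V) [Fintype V] [DecidableEq V]
    (P : Finpartition (univ : Finset V)) : Multigraph {A // A ∈ P.parts} where
  mult A B := if A = B then 0 else ∑ u ∈ A.1, ∑ v ∈ B.1, G.mult u v
  symm := by
    intro A B
    try dsimp only
    by_cases h : A = B
    · simp [h]
    · rw [if_neg h, if_neg (Ne.symm h), Finset.sum_comm]
      exact Finset.sum_congr rfl fun b _ => Finset.sum_congr rfl fun a _ => G.symm a b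
  loopless := by intro A; simp

/-- Adding one new edge between distinct existing vertices. -/
def addEdge (G : Multigraph V) [DecidableEq V] (x y : V) (hxy : x ≠ y) : Multigraph V where
  mult u v := G.mult u v + (if (u = x ∧ v = y) ∨ (u = y ∧ v = x) then 1 else 0)
  symm := by
    intro u v
    try dsimp only
    rw [G.symm u v]
    by_cases h1 : (u = x ∧ v = y) ∨ (u = y ∧ v = x)
    · rw [if_pos h1, if_pos (by tauto)]
    · rw [if_neg h1, if_neg (by tauto)]
  loopless := by
    intro v
    try dsimp only
    have h : ¬((v = x ∧ v = y) ∨ (v = y ∧ v = x)) := by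
      rintro (⟨rfl, rfl⟩ | ⟨rfl, rfl⟩) <;> exact hxy rfl
    simp [h, G.loopless]

/-- `aK₂`: two vertices joined by `a` parallel edges. -/
def kTwo (a : ℕ) : Multigraph (Fin 2) where
  mult u v := if u = v then 0 else a
  symm := by
    intro u v
    try dsimp only
    by_cases h : u = v
    · subst h; rfl
    · rw [if_neg h, if_neg (Ne.symm h)]
  loopless := by intro v; simp

def triMult (a b c : ℕ) : ℕ → ℕ → ℕ
  | 0, 1 => a | 1, 0 => a
  | 0, 2 => b | 2, 0 => b
  | 1, 2 => c | 2, 1 => c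
  | _, _ => 0

/-- `T_{a,b,c}`: three vertices, the three pairs joined by `a`, `b`, `c` parallel edges. -/
def triangle (a b c : ℕ) : Multigraph (Fin 3) where
  mult u v := triMult a b c u.val v.val
  symm := by intro u v; fin_cases u <;> fin_cases v <;> rfl
  loopless := by intro v; fin_cases v <;> rfl

def w1Mult : ℕ → ℕ → ℕ
  | 0, 1 => 1 | 1, 0 => 1 | 0, 2 => 1 | 2, 0 => 1 | 1, 2 => 1 | 2, 1 => 1
  | 0, 3 => 3 | 3, 0 => 3 | 1, 3 => 3 | 3, 1 => 3 | 2, 3 => 3 | 3, 2 => 3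
  | _, _ => 0

/-- The 4-vertex, 12-edge planar multigraph `W₁`: a triangle of single edges whose
three vertices are each joined to a central vertex by triple edges. -/
def W1 : Multigraph (Fin 4) where
  mult u v := w1Mult u.val v.val
  symm := by decide
  loopless := by decide

def w2Mult : ℕ → ℕ → ℕ
  | 0, 1 => 3 | 1, 0 => 3
  | 0, 2 => 2 | 2, 0 => 2 | 0, 3 => 2 | 3, 0 => 2
  | 1, 2 => 2 | 2, 1 => 2 | 1, 3 => 2 | 3, 1 => 2
  | 2, 3 => 1 | 3, 2 => 1
  | _, _ => 0

/-- The 4-vertex, 12-edge planar multigraph `W₂`. -/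
def W2 : Multigraph (Fin 4) where
  mult u v := w2Mult u.val v.val
  symm := by decide
  loopless := by decide

def q4Mult (a1 a2 a3 a4 : ℕ) : ℕ → ℕ → ℕ
  | 0, 1 => a1 | 1, 0 => a1
  | 1, 2 => a2 | 2, 1 => a2
  | 2, 3 => a3 | 3, 2 => a3
  | 3, 0 => a4 | 0, 3 => a4
  | _, _ => 0

/-- `Q_{a₁,a₂,a₃,a₄}`: the 4-cycle with edge multiplicities `a₁,…,a₄`. -/
def Q4 (a1 a2 a3 a4 : ℕ) : Multigraph (Fin 4) where
  mult u v := q4Mult a1 a2 a3 a4 u.val v.val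
  symm := by intro u v; fin_cases u <;> fin_cases v <;> rfl
  loopless := by intro v; fin_cases v <;> rfl

/-- Membership (up to isomorphism) in `𝒩₅ = {2K₂, 3K₂, T₁,₃,₃, T₂,₂,₃, W₁, W₂}`. -/
def InN5 (G : Multigraph V) : Prop :=
  G.Iso (kTwo 2) ∨ G.Iso (kTwo 3) ∨ G.Iso (triangle 1 3 3) ∨
    G.Iso (triangle 2 2 3) ∨ G.Iso W1 ∨ G.Iso W2

/-- `𝒮₅`-contractibility: `G` is connected, `w(G) ≥ 0` (every partition with at least
two parts has nonnegative weight), and no contraction of `G` lies in `𝒩₅`. -/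
def S5Contractible (G : Multigraph V) [Fintype V] [DecidableEq V] : Prop :=
  G.Connected ∧
    (∀ P : Finpartition (univ : Finset V), 2 ≤ P.parts.card → 0 ≤ G.pweight P) ∧
    (∀ P : Finpartition (univ : Finset V), ¬ InN5 (G.contract P))

/-- Strong `ℤ_ℓ`-connectivity: every zero-sum boundary `β` admits a `β`-orientation.
An orientation is encoded as `o : V → V → ℕ` where `o u v` is the number of the
`G.mult u v` parallel edges between `u` and `v` that are oriented from `u` to `v`. -/
def StronglyZConnected (G : Multigraph V) [Fintype V] (l : ℕ) : Prop :=
  ∀ β : V → ZMod l, ∑ v, β v = 0 →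
    ∃ o : V → V → ℕ, (∀ u v, o u v + o v u = G.mult u v) ∧
      ∀ v, (∑ u, (o v u : ZMod l)) - (∑ u, (o u v : ZMod l)) = β v

end Multigraph

/-! Summing the cuts over the parts counts each edge between two parts twice, so
`Σ d(Vᵢ) = 2e(G') − Σ 2e(G'[Vᵢ]) ≥ 24 − Σ 2e(G'[Vᵢ])`. Since two vertices span at most 4 edges,
this settles every partition whose parts have at most two vertices. Otherwise either the partition
is trivial, of weight at least 6, or some part `A` has three vertices; then there are only two
parts and `d(A) = d(v) ≥ 4` for the vertex `v` outside `A`. -/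

theorem Finpartition.card_add_card_parts_le {α : Type*} [DecidableEq α] {s : Finset α}
    (P : Finpartition s) {A : Finset α} (hA : A ∈ P.parts) :
    A.card + P.parts.card ≤ s.card + 1 := by
  have hrest : (P.parts.erase A).card • 1 ≤ ∑ B ∈ P.parts.erase A, B.card :=
    Finset.card_nsmul_le_sum _ _ _ fun B hB =>
      (P.nonempty_of_mem_parts (Finset.mem_of_mem_erase hB)).card_pos
  rw [smul_eq_mul, mul_one] at hrest
  have hsplit := Finset.sum_erase_add _ (fun B => B.card) hA
  rw [P.sum_card_parts] at hsplit
  have := Finset.card_erase_add_one hA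
  omega

namespace Multigraph

variable {V : Type*}

/-- Twice the number of edges of the induced subgraph `G[A]`. -/
def innerDegreeSum (G : Multigraph V) (A : Finset V) : ℕ := ∑ u ∈ A, ∑ v ∈ A, G.mult u v

lemma innerDegreeSum_le [DecidableEq V] (G : Multigraph V) {m : ℕ} (hmu : ∀ u v, G.mult u v ≤ m)
    (A : Finset V) : G.innerDegreeSum A ≤ A.card * ((A.card - 1) * m) := by
  unfold innerDegreeSum
  refine Finset.sum_le_card_nsmul _ _ _ fun u hu => ?_
  rw [← Finset.sum_erase (f := G.mult u) _ (G.loopless u), ← Finset.card_erase_of_mem hu]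
  exact Finset.sum_le_card_nsmul _ _ _ fun v _ => hmu u v

variable [Fintype V] [DecidableEq V]

lemma innerDegreeSum_add_cut (G : Multigraph V) (A : Finset V) :
    G.innerDegreeSum A + G.cut A = ∑ u ∈ A, G.degree u := by
  rw [innerDegreeSum, cut, ← Finset.sum_add_distrib]
  exact Finset.sum_congr rfl fun u _ => Finset.sum_add_sum_compl A _

lemma sum_innerDegreeSum_add_sum_cut (G : Multigraph V) (P : Finpartition (univ : Finset V)) :
    ∑ A ∈ P.parts, G.innerDegreeSum A + ∑ A ∈ P.parts, G.cut A = ∑ u, G.degree u := by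
  rw [← Finset.sum_add_distrib]
  simp_rw [innerDegreeSum_add_cut]
  refine (Finset.sum_biUnion P.disjoint).symm.trans ?_
  rw [P.biUnion_parts]

lemma cut_compl (G : Multigraph V) (A : Finset V) : G.cut Aᶜ = G.cut A := by
  rw [cut, cut, compl_compl, Finset.sum_comm]
  exact Finset.sum_congr rfl fun u _ => Finset.sum_congr rfl fun v _ => G.symm v u

lemma cut_singleton (G : Multigraph V) (v : V) : G.cut {v} = G.degree v := by
  rw [cut, Finset.sum_singleton, degree, ← Finset.sum_add_sum_compl {v} (G.mult v),
    Finset.sum_singleton, G.loopless, zero_add]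

lemma sum_degree_add_le_sum_cut (G : Multigraph V) {m : ℕ} (hmu : ∀ u v, G.mult u v ≤ m)
    (P : Finpartition (univ : Finset V)) (hP : ∀ A ∈ P.parts, A.card ≤ 2) :
    ∑ u, G.degree u + 2 * m * P.parts.card ≤
      ∑ A ∈ P.parts, G.cut A + 2 * m * Fintype.card V := by
  have hpart : ∀ A ∈ P.parts, G.innerDegreeSum A + 2 * m ≤ 2 * m * A.card := by
    intro A hA
    have hinner := G.innerDegreeSum_le hmu A
    have hpos := (P.nonempty_of_mem_parts hA).card_pos
    have h2 := hP A hA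
    interval_cases A.card <;> lia
  have hsum := Finset.sum_le_sum hpart
  rw [Finset.sum_add_distrib, Finset.sum_const, smul_eq_mul, ← Finset.mul_sum,
    P.sum_card_parts, Finset.card_univ] at hsum
  rw [← G.sum_innerDegreeSum_add_sum_cut P]
  nlinarith

end Multigraph

open Multigraph

theorem four_vertex_weights_general {V : Type*} [Fintype V] [DecidableEq V]
    (G' : Multigraph V) (hcard : Fintype.card V = 4)
    (he : 12 ≤ G'.edgeCount)
    (hdeg : ∀ v, 4 ≤ G'.degree v)
    (hmu : ∀ u v, G'.mult u v ≤ 4) :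
    ∀ P : Finpartition (univ : Finset V), 0 ≤ G'.pweight P := by
  intro P
  have hdeg_sum : 24 ≤ ∑ u, G'.degree u :=
    (Nat.le_div_iff_mul_le two_pos).mp he
  have ht := P.card_parts_le_card
  rw [Finset.card_univ, hcard] at ht
  unfold pweight partsWeight
  by_cases hsmall : ∀ A ∈ P.parts, A.card ≤ 2
  · have := G'.sum_degree_add_le_sum_cut hmu P hsmall
    rw [hcard] at this
    push_cast [← Nat.cast_sum]
    lia
  · push Not at hsmall
    obtain ⟨A, hA, hA_large⟩ := hsmall
    have hAt := P.card_add_card_parts_le hA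
    have hAle : (G'.cut A : ℤ) ≤ ∑ B ∈ P.parts, (G'.cut B : ℤ) :=
      Finset.single_le_sum (fun B _ => Nat.cast_nonneg _) hA
    rw [Finset.card_univ, hcard] at hAt
    have hpos : 0 < P.parts.card := Finset.card_pos.mpr ⟨A, hA⟩
    obtain hA4 | hA3 : A.card = 4 ∨ A.card = 3 := by lia
    · lia
    · obtain ⟨v, hv⟩ : ∃ v, Aᶜ = {v} := Finset.card_eq_one.mp (by
        rw [Finset.card_compl, hcard, hA3])
      have hcutA : G'.cut A = G'.degree v := by rw [← cut_compl, hv, cut_singleton]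
      have := hdeg v
      lia

/-- if a graph `G` on 4 vertices has a spanning subgraph `G'` with
`e(G') ≥ 12`, `δ(G') ≥ 4` and `μ(G') ≤ 4`, then every partition `𝒫` of `V(G')`
satisfies `w_{G'}(𝒫) ≥ 0`. -/
theorem four_vertex_weights {V : Type*} [Fintype V] [DecidableEq V]
    (G G' : Multigraph V) (hcard : Fintype.card V = 4)
    (hsub : ∀ u v, G'.mult u v ≤ G.mult u v)
    (he : 12 ≤ G'.edgeCount)
    (hdeg : ∀ v, 4 ≤ G'.degree v)
    (hmu : ∀ u v, G'.mult u v ≤ 4) :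
    ∀ P : Finpartition (univ : Finset V), 0 ≤ G'.pweight P :=
  four_vertex_weights_general G' hcard he hdeg hmu
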